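/- Let a, b, c be distinct nonzero rationals with ab+1 = r², ac+1 = s², bc+1 = t² for nonzero rationals r, s, t. On the elliptic curve E': y² = (x+ab)(x+ac)(x+bc), the doubling of S' = (1, rst) equals the 2-torsion point (-ab, 0) if and only if (1 + 2ab − abc(c−a−b))² = 0, equivalently (ab+1)² = ab(c−a)(c−b). -/

import Mathlib

/-! The tangent at `S' = (1, y)` has slope `ℓ = f'(1) / 2y`, where `f` is the cubic on the right,
so `x(2S') = ℓ² - (ab + ac + bc) - 2`. Clearing the denominator `4y² = 4f(1)`, the numerator of `x(2S') + ab`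
turns out to be the perfect square `(1 + 2ab − abc(c−a−b))²`. Since `(-ab, 0)` is a 2-torsion point,
`2S'` equals it as soon as their `x`-coordinates agree. -/

/-- The elliptic curve `E': y² = (x+ab)(x+ac)(x+bc)` in Weierstrass form. -/
def curveE' (a b c : ℚ) : WeierstrassCurve.Affine ℚ :=
  { a₁ := 0, a₂ := a * b + a * c + b * c, a₃ := 0,
    a₄ := a * b * c * (a + b + c), a₆ := (a * b * c) ^ 2 }

namespace WeierstrassCurve.Affine.Point

variable {F : Type*} [Field F] {W : WeierstrassCurve.Affine F}

lemma some_eq_some_iff_of_Y_eq_negY {x₁ y₁ x₂ y₂ : F} (h₁ : W.Nonsingular x₁ y₁)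
    (h₂ : W.Nonsingular x₂ y₂) (hy₂ : y₂ = W.negY x₂ y₂) :
    some _ _ h₁ = some _ _ h₂ ↔ x₁ = x₂ := by
  rw [some.injEq]
  refine ⟨And.left, fun hx => ⟨hx, ?_⟩⟩
  rcases Y_eq_of_X_eq h₁.1 h₂.1 hx with hy | hy
  · exact hy
  · rw [hy, ← hy₂]

end WeierstrassCurve.Affine.Point

open WeierstrassCurve.Affine

lemma curveE'_negY (a b c x y : ℚ) : (curveE' a b c).negY x y = -y := by
  simp [negY, curveE']

lemma curveE'_Y_ne_negY {a b c y : ℚ} (x : ℚ) (hy : y ≠ 0) : y ≠ (curveE' a b c).negY x y := by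
  rw [curveE'_negY]
  contrapose! hy
  linarith

lemma curveE'_equation_one_iff (a b c y : ℚ) :
    (curveE' a b c).Equation 1 y ↔ y ^ 2 = (a * b + 1) * (a * c + 1) * (b * c + 1) := by
  rw [equation_iff]
  simp only [curveE']
  constructor <;> intro h <;> linear_combination h

lemma curveE'_addX_double_one_add (a b c y : ℚ) (hy : y ≠ 0)
    (h : (curveE' a b c).Equation 1 y) :
    (curveE' a b c).addX 1 1 ((curveE' a b c).slope 1 1 y y) + a * b =
      (1 + 2 * a * b - a * b * c * (c - a - b)) ^ 2 / (4 * y ^ 2) := by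
  rw [curveE'_equation_one_iff] at h
  rw [slope_of_Y_ne rfl (curveE'_Y_ne_negY 1 hy), curveE'_negY, sub_neg_eq_add, ← two_mul]
  simp only [addX, curveE']
  field_simp
  linear_combination (-(16 : ℚ) * (a * c + b * c + 2)) * h

lemma one_add_two_mul_sub_eq (a b c : ℚ) :
    1 + 2 * a * b - a * b * c * (c - a - b) = (a * b + 1) ^ 2 - a * b * (c - a) * (c - b) := by
  ring

theorem two_S_eq_C'_iff_general (a b c r s t : ℚ)
    (hr : r ≠ 0) (hs : s ≠ 0) (ht : t ≠ 0)
    (hS : (curveE' a b c).Nonsingular 1 (r * s * t))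
    (hC : (curveE' a b c).Nonsingular (-(a * b)) 0) :
    ((2 • WeierstrassCurve.Affine.Point.some _ _ hS : (curveE' a b c).Point) =
        WeierstrassCurve.Affine.Point.some _ _ hC ↔
      (1 + 2 * a * b - a * b * c * (c - a - b)) ^ 2 = 0) ∧
    ((1 + 2 * a * b - a * b * c * (c - a - b)) ^ 2 = 0 ↔
      (a * b + 1) ^ 2 = a * b * (c - a) * (c - b)) := by
  have hy : r * s * t ≠ 0 := by positivity
  refine ⟨?_, by rw [one_add_two_mul_sub_eq, sq_eq_zero_iff, sub_eq_zero]⟩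
  rw [two_nsmul, Point.add_self_of_Y_ne (curveE'_Y_ne_negY 1 hy),
    Point.some_eq_some_iff_of_Y_eq_negY _ _ (by rw [curveE'_negY, neg_zero]),
    ← add_neg_eq_zero, neg_neg, curveE'_addX_double_one_add a b c _ hy hS.1,
    div_eq_zero_iff, or_iff_left (by positivity)]

/-- On `E': y² = (x+ab)(x+ac)(x+bc)`, the doubling of `S' = (1, rst)` equals the
2-torsion point `(-ab, 0)` if and only if `(1 + 2ab − abc(c−a−b))² = 0`,
equivalently `(ab+1)² = ab(c−a)(c−b)`. -/
theorem two_S_eq_C'_iff (a b c r s t : ℚ) (ha : a ≠ 0) (hb : b ≠ 0) (hc : c ≠ 0)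
    (hab' : a ≠ b) (hac' : a ≠ c) (hbc' : b ≠ c)
    (hr : r ≠ 0) (hs : s ≠ 0) (ht : t ≠ 0)
    (hab : a * b + 1 = r ^ 2) (hac : a * c + 1 = s ^ 2) (hbc : b * c + 1 = t ^ 2)
    (hS : (curveE' a b c).Nonsingular 1 (r * s * t))
    (hC : (curveE' a b c).Nonsingular (-(a * b)) 0) :
    ((2 • WeierstrassCurve.Affine.Point.some _ _ hS : (curveE' a b c).Point) =
        WeierstrassCurve.Affine.Point.some _ _ hC ↔
      (1 + 2 * a * b - a * b * c * (c - a - b)) ^ 2 = 0) ∧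
    ((1 + 2 * a * b - a * b * c * (c - a - b)) ^ 2 = 0 ↔
      (a * b + 1) ^ 2 = a * b * (c - a) * (c - b)) :=
  two_S_eq_C'_iff_general a b c r s t hr hs ht hS hC
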